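/- Let A be the free commutative (non-associative) algebra over ℚ on one generator X, and let J be the ideal of elements with no terms of degree < 5. Then the map φ : ℤ × ℤ → A/J given by (p,q) ↦ 1 + pX + C(p,2)X² + C(p,3)X³ + (C(p,4) − q)·(X³·X) + q·(X²·X²) is an injective multiplicative homomorphism from the loop L with product (p,q)·(p',q') = (p+p', q+q'+C(p,2)C(p',2)) to the multiplicative magma A/J, i.e. φ((p,q)·(p',q')) = φ(p,q)·φ(p',q') and φ is injective. -/

import Mathlib

/-!
Multiplicativity is a direct expansion in A/J: the only nonzero products of basis monomials
are X·X = X², X·X² = X²·X = X³, X·X³ = X³·X and X²·X², and the coefficients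
match by the Vandermonde identities C(p + p', k) = Σᵢ C(p, i) C(p', k - i), k ≤ 4. The summand
C(p,2)C(p',2) of C(p + p', 4) is what moves from X³X to X²X², producing the extra term of q.

For injectivity, A/J maps onto the commutative algebra with basis 1, x, x², y in which
x·x = x², x²·x² = y and all other products of x, x², y vanish: X³ and X³X go to 0 and
φ(p, q) goes to 1 + p x + C(p,2) x² + q y, from which p and q can be read off. Monomials of
degree ≥ 5 go to 0 because the evaluation commutes with the automorphisms scaling the
coordinate of degree d by tᵈ, and no coordinate has degree ≥ 5.
-/

/-- Binomial coefficients C(p,k) for arbitrary integers p. -/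
def c2 (p : ℤ) : ℤ := p * (p - 1) / 2
def c3 (p : ℤ) : ℤ := p * (p - 1) * (p - 2) / 6
def c4 (p : ℤ) : ℤ := p * (p - 1) * (p - 2) * (p - 3) / 24

/-- The product (p,q)·(p',q') = (p+p', q+q'+C(p,2)·C(p',2)). -/
def lmul4 (x y : ℤ × ℤ) : ℤ × ℤ := (x.1 + y.1, x.2 + y.2 + c2 x.1 * c2 y.1)

/-- The free unital non-associative ℚ-algebra on one generator X. -/
abbrev R1 : Type := Unitization ℚ (MonoidAlgebra ℚ (FreeMagma Unit))

/-- The congruence identifying xy with yx (commutativity) and killing all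
monomials of degree ≥ 5; the quotient is the free commutative non-associative
algebra A on one generator modulo the ideal J of elements with no terms of
degree < 5. -/
def relAJ : R1 → R1 → Prop := fun a b =>
  (∃ x y : R1, a = x * y ∧ b = y * x) ∨
  (∃ m : FreeMagma Unit, 5 ≤ m.length ∧
    a = Unitization.inr (MonoidAlgebra.single m (1 : ℚ)) ∧ b = 0)

/-- A/J as a quotient by the corresponding ring congruence. -/
abbrev AJ : Type := (ringConGen relAJ).Quotient

/-- The generator X of A/J. -/
noncomputable def XX : AJ :=
  ((Unitization.inr (MonoidAlgebra.single (FreeMagma.of ()) (1 : ℚ)) : R1) : AJ)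

/-- The map φ : L → A/J,
(p,q) ↦ 1 + pX + C(p,2)X² + C(p,3)X³ + (C(p,4)−q)·X³X + q·X²X². -/
noncomputable def phi (x : ℤ × ℤ) : AJ :=
  1 + (x.1 : AJ) * XX + (c2 x.1 : AJ) * (XX * XX)
    + (c3 x.1 : AJ) * (XX * XX * XX)
    + ((c4 x.1 - x.2 : ℤ) : AJ) * (XX * XX * XX * XX)
    + (x.2 : AJ) * ((XX * XX) * (XX * XX))

lemma two_mul_c2 (p : ℤ) : 2 * c2 p = p * (p - 1) :=
  Int.mul_ediv_cancel' (Int.even_mul_pred_self p).two_dvd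

lemma six_mul_c3 (p : ℤ) : 6 * c3 p = p * (p - 1) * (p - 2) := by
  refine Int.mul_ediv_cancel' ((ZMod.intCast_zmod_eq_zero_iff_dvd _ 6).mp ?_)
  push_cast
  exact (by decide : ∀ x : ZMod 6, x * (x - 1) * (x - 2) = 0) _

lemma twentyFour_mul_c4 (p : ℤ) : 24 * c4 p = p * (p - 1) * (p - 2) * (p - 3) := by
  refine Int.mul_ediv_cancel' ((ZMod.intCast_zmod_eq_zero_iff_dvd _ 24).mp ?_)
  push_cast
  exact (by decide : ∀ x : ZMod 24, x * (x - 1) * (x - 2) * (x - 3) = 0) _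

lemma c2_add (p p' : ℤ) : c2 (p + p') = c2 p + c2 p' + p * p' := by
  apply mul_left_cancel₀ (two_ne_zero : (2 : ℤ) ≠ 0)
  linear_combination two_mul_c2 (p + p') - two_mul_c2 p - two_mul_c2 p'

lemma c3_add (p p' : ℤ) : c3 (p + p') = c3 p + c3 p' + c2 p * p' + p * c2 p' := by
  apply mul_left_cancel₀ (by norm_num : (6 : ℤ) ≠ 0)
  linear_combination six_mul_c3 (p + p') - six_mul_c3 p - six_mul_c3 p'
    - 3 * p' * two_mul_c2 p - 3 * p * two_mul_c2 p'

lemma c4_add (p p' : ℤ) :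
    c4 (p + p') = c4 p + c4 p' + c3 p * p' + p * c3 p' + c2 p * c2 p' := by
  apply mul_left_cancel₀ (by norm_num : (24 : ℤ) ≠ 0)
  linear_combination twentyFour_mul_c4 (p + p') - twentyFour_mul_c4 p - twentyFour_mul_c4 p'
    - 4 * p' * six_mul_c3 p - 4 * p * six_mul_c3 p'
    - 12 * c2 p' * two_mul_c2 p - 6 * p * (p - 1) * two_mul_c2 p'

def gen : FreeMagma Unit := FreeMagma.of ()

namespace AJ

noncomputable def monomial (m : FreeMagma Unit) : AJ :=
  ((Unitization.inr (MonoidAlgebra.single m (1 : ℚ)) : R1) : AJ)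

lemma monomial_mul (m n : FreeMagma Unit) : monomial m * monomial n = monomial (m * n) := by
  rw [monomial, monomial, ← RingCon.coe_mul, ← Unitization.inr_mul,
    MonoidAlgebra.single_mul_single, one_mul]
  rfl

lemma mul_comm (a b : AJ) : a * b = b * a := by
  induction a using Quotient.inductionOn
  induction b using Quotient.inductionOn
  exact (RingCon.eq _).mpr (RingConGen.Rel.of _ _ (Or.inl ⟨_, _, rfl, rfl⟩))

lemma monomial_eq_zero {m : FreeMagma Unit} (h : 5 ≤ m.length) : monomial m = 0 :=
  (RingCon.eq _).mpr (RingConGen.Rel.of _ _ (Or.inr ⟨m, h, rfl, rfl⟩))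

lemma monomial_mul_comm (m n : FreeMagma Unit) : monomial (m * n) = monomial (n * m) := by
  rw [← monomial_mul, mul_comm, monomial_mul]

end AJ

open AJ in
lemma phi_eq (x : ℤ × ℤ) :
    phi x = 1 + x.1 • monomial gen + c2 x.1 • monomial (gen * gen)
      + c3 x.1 • monomial (gen * gen * gen) + (c4 x.1 - x.2) • monomial (gen * gen * gen * gen)
      + x.2 • monomial (gen * gen * (gen * gen)) := by
  simp only [phi, ← zsmul_eq_mul, show XX = monomial gen from rfl, monomial_mul]

open AJ in
theorem phi_lmul4 (x y : ℤ × ℤ) : phi (lmul4 x y) = phi x * phi y := by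
  simp only [phi_eq, lmul4, c2_add, c3_add, c4_add, mul_add, add_mul, one_mul, mul_one,
    smul_mul_assoc, mul_smul_comm, monomial_mul]
  simp (disch := decide) only [monomial_eq_zero]
  rw [monomial_mul_comm gen (gen * gen), monomial_mul_comm gen (gen * gen * gen)]
  module

-- coordinates on the basis 1, x, x², x²·x²
abbrev Model : Type := Fin 4 → ℚ

def modelMul : Model →ₗ[ℚ] Model →ₗ[ℚ] Model :=
  LinearMap.mk₂ ℚ
    (fun a b => ![a 0 * b 0, a 0 * b 1 + a 1 * b 0, a 0 * b 2 + a 1 * b 1 + a 2 * b 0,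
      a 0 * b 3 + a 2 * b 2 + a 3 * b 0])
    (by intros; funext i; fin_cases i <;> simp <;> ring)
    (by intros; funext i; fin_cases i <;> simp <;> ring)
    (by intros; funext i; fin_cases i <;> simp <;> ring)
    (by intros; funext i; fin_cases i <;> simp <;> ring)

def modelOne : Model := ![1, 0, 0, 0]

lemma modelMul_comm (a b : Model) : modelMul a b = modelMul b a := by
  funext i; fin_cases i <;> simp [modelMul] <;> ring

lemma modelMul_modelOne (a : Model) : modelMul a modelOne = a := by
  funext i; fin_cases i <;> simp [modelMul, modelOne]

lemma modelOne_modelMul (a : Model) : modelMul modelOne a = a := by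
  rw [modelMul_comm, modelMul_modelOne]

def degree : Fin 4 → ℕ := ![0, 1, 2, 4]

def scaleByDegree (t : ℚ) (a : Model) : Model := fun i => t ^ degree i * a i

lemma scaleByDegree_modelMul (t : ℚ) (a b : Model) :
    scaleByDegree t (modelMul a b) = modelMul (scaleByDegree t a) (scaleByDegree t b) := by
  funext i; fin_cases i <;> simp [modelMul, scaleByDegree, degree] <;> ring

def evalWord : FreeMagma Unit → Model
  | .of _ => ![0, 1, 0, 0]
  | .mul m n => modelMul (evalWord m) (evalWord n)

lemma scaleByDegree_evalWord (t : ℚ) :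
    ∀ m : FreeMagma Unit, scaleByDegree t (evalWord m) = t ^ m.length • evalWord m
  | .of _ => by funext i; fin_cases i <;> simp [evalWord, scaleByDegree, degree]
  | .mul m n => by
    rw [evalWord, scaleByDegree_modelMul, scaleByDegree_evalWord t m,
      scaleByDegree_evalWord t n, map_smul, LinearMap.map_smul₂, smul_smul, FreeMagma.length,
      pow_add, mul_comm]

lemma evalWord_eq_zero {m : FreeMagma Unit} (h : 5 ≤ m.length) : evalWord m = 0 := by
  funext i
  have hlt : (2 : ℚ) ^ degree i < 2 ^ m.length :=
    pow_lt_pow_right₀ one_lt_two (by fin_cases i <;> simp [degree] <;> omega)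
  have hi := congrFun (scaleByDegree_evalWord 2 m) i
  simp only [scaleByDegree, Pi.smul_apply, smul_eq_mul] at hi
  exact (mul_eq_mul_right_iff.mp hi).resolve_left hlt.ne

noncomputable def evalAlg : MonoidAlgebra ℚ (FreeMagma Unit) →ₗ[ℚ] Model :=
  Finsupp.linearCombination ℚ evalWord ∘ₗ (MonoidAlgebra.coeffLinearEquiv ℚ).toLinearMap

lemma evalAlg_single (m : FreeMagma Unit) (c : ℚ) :
    evalAlg (MonoidAlgebra.single m c) = c • evalWord m :=
  Finsupp.linearCombination_single ℚ c m

lemma evalAlg_mul (a b : MonoidAlgebra ℚ (FreeMagma Unit)) :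
    evalAlg (a * b) = modelMul (evalAlg a) (evalAlg b) := by
  induction a using MonoidAlgebra.induction_linear with
  | zero => simp
  | add f g hf hg => simp only [add_mul, map_add, hf, hg, LinearMap.add_apply]
  | single m c =>
    induction b using MonoidAlgebra.induction_linear with
    | zero => simp
    | add f g hf hg => simp only [mul_add, map_add, hf, hg]
    | single n d =>
      rw [MonoidAlgebra.single_mul_single, evalAlg_single, evalAlg_single, evalAlg_single,
        map_smul, LinearMap.map_smul₂, smul_smul, mul_comm]
      rfl

noncomputable def evalUnitization : R1 →+ Model :=
  AddMonoidHom.mk' (fun x => x.fst • modelOne + evalAlg x.snd) fun x y => by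
    simp only [Unitization.fst_add, Unitization.snd_add, add_smul, map_add]
    abel

lemma evalUnitization_mul (x y : R1) :
    evalUnitization (x * y) = modelMul (evalUnitization x) (evalUnitization y) := by
  simp only [evalUnitization, AddMonoidHom.mk'_apply, Unitization.fst_mul, Unitization.snd_mul,
    map_add, map_smul, evalAlg_mul, LinearMap.add_apply, LinearMap.smul_apply,
    modelMul_modelOne, modelOne_modelMul]
  module

lemma evalUnitization_eq_of_rel {a b : R1} (h : RingConGen.Rel relAJ a b) :
    evalUnitization a = evalUnitization b := by
  induction h with
  | of x y hxy =>
    rcases hxy with ⟨u, v, rfl, rfl⟩ | ⟨m, hm, rfl, rfl⟩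
    · rw [evalUnitization_mul, evalUnitization_mul, modelMul_comm]
    · simp [evalUnitization, evalAlg_single, evalWord_eq_zero hm]
  | refl x => rfl
  | symm _ ih => exact ih.symm
  | trans _ _ ih1 ih2 => exact ih1.trans ih2
  | add _ _ ih1 ih2 => rw [map_add, map_add, ih1, ih2]
  | mul _ _ ih1 ih2 => rw [evalUnitization_mul, evalUnitization_mul, ih1, ih2]

noncomputable def evalAJ : AJ →+ Model :=
  (ringConGen relAJ).toAddCon.lift evalUnitization fun _ _ => evalUnitization_eq_of_rel

lemma evalAJ_one : evalAJ 1 = modelOne := by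
  change evalUnitization 1 = modelOne
  simp [evalUnitization]

lemma evalAJ_monomial (m : FreeMagma Unit) : evalAJ (AJ.monomial m) = evalWord m := by
  change evalUnitization _ = evalWord m
  simp [evalUnitization, evalAlg_single]

open AJ in
lemma evalAJ_phi (x : ℤ × ℤ) :
    evalAJ (phi x) = ![1, (x.1 : ℚ), (c2 x.1 : ℚ), (x.2 : ℚ)] := by
  rw [phi_eq]
  simp only [map_add, map_zsmul, evalAJ_one, evalAJ_monomial]
  funext i
  fin_cases i <;> simp [evalWord, modelMul, modelOne, gen]

lemma phi_injective : Function.Injective phi := by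
  intro x y h
  have hval := congrArg evalAJ h
  rw [evalAJ_phi, evalAJ_phi] at hval
  have h1 := congrFun hval 1
  have h3 := congrFun hval 3
  simp only [Matrix.cons_val] at h1 h3
  exact Prod.ext (by exact_mod_cast h1) (by exact_mod_cast h3)

/-- φ is an injective multiplicative homomorphism from the loop
L = ℤ × ℤ with product (p,q)·(p',q') = (p+p', q+q'+C(p,2)C(p',2)) into the
multiplicative magma A/J. -/
theorem stmt7 :
    (∀ x y : ℤ × ℤ, phi (lmul4 x y) = phi x * phi y) ∧
    Function.Injective phi :=
  ⟨phi_lmul4, phi_injective⟩
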